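/- Let F be a figure with equilibrium function eq and base vertex w₀, and let h,h'∈H_F. Then h≤h' if and only if h' can be obtained from h by a finite sequence of allowed upward flips at forced components distinct from U_∞; moreover, in this case h' can be reached from h by exactly Δ(h,h')/4 upward flips. -/

import Mathlib

open Classical

noncomputable section

abbrev Vtx : Type := ℤ × ℤ
abbrev GArc : Type := Vtx × Vtx

/-- `a` is an arc of the grid graph `Λ⁺`: its endpoints differ by a unit vector. -/
def IsArc (a : GArc) : Prop :=
  (a.2.1 - a.1.1).natAbs + (a.2.2 - a.1.2).natAbs = 1

/-- reversal of an arc -/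
def arev (a : GArc) : GArc := (a.2, a.1)

/-- `+1` if the cell with lower-left corner `c` is black, `-1` if it is white
(checkerboard coloring). -/
def colorSign (c : Vtx) : ℤ := if (c.1 + c.2) % 2 = 0 then 1 else -1

/-- spin of an arc: `+1` if a traveler along the arc has a white cell on its left,
`-1` otherwise. -/
def sp (a : GArc) : ℤ :=
  colorSign a.1 * ((a.2.2 - a.1.2) ^ 2 - (a.2.1 - a.1.1) ^ 2)

/-- the arcs of a path/cycle given by its list of vertices -/
def arcsOf (C : List Vtx) : List GArc := C.zip C.tail

/-- sum of a function `g` on arcs over all the arcs of `C` (with multiplicity) -/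
def sumOn (g : GArc → ℤ) (C : List Vtx) : ℤ := ((arcsOf C).map g).sum

/-- a (closed) cycle of the grid -/
def IsCycle (C : List Vtx) : Prop :=
  2 ≤ C.length ∧ C.head? = C.getLast? ∧ ∀ a ∈ arcsOf C, IsArc a

/-- an elementary cycle: no repeated vertex except the endpoints -/
def IsElemCycle (C : List Vtx) : Prop := IsCycle C ∧ C.dropLast.Nodup

/-- contribution of an arc to the winding number of a cycle around the center of
cell `c` (crossings of the horizontal ray going East from the center of `c`). -/
def windTerm (c : Vtx) (a : GArc) : ℤ :=
  if a.1.1 = a.2.1 ∧ c.1 < a.1.1 ∧ min a.1.2 a.2.2 = c.2 then a.2.2 - a.1.2 else 0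

/-- winding number of the cycle `C` around the center of the cell `c` -/
def wind (C : List Vtx) (c : Vtx) : ℤ := sumOn (windTerm c) C

/-- a cycle is clockwise when its winding number around any cell is nonpositive
(`-1` on enclosed cells, `0` elsewhere) -/
def IsClockwise (C : List Vtx) : Prop := ∀ c : Vtx, wind C c ≤ 0

/-- a cell is enclosed by `C` when the winding number of `C` around it is nonzero -/
def Encloses (C : List Vtx) (c : Vtx) : Prop := wind C c ≠ 0

/-- number of black cells minus number of white cells enclosed by a clockwise cycle -/
def Dis (C : List Vtx) : ℤ := -∑ᶠ c : Vtx, wind C c * colorSign c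

/-- 4-adjacency of cells (shared edge) -/
def adj4 (c c' : Vtx) : Prop := (c'.1 - c.1).natAbs + (c'.2 - c.2).natAbs = 1

/-- 8-adjacency of cells (shared vertex at least) -/
def adj8 (c c' : Vtx) : Prop := c ≠ c' ∧ (c'.1 - c.1).natAbs ≤ 1 ∧ (c'.2 - c.2).natAbs ≤ 1

/-- a figure: a nonempty, finite, 4-connected set of cells such that no vertex has
all its incident edges on the boundary (no diagonal pinch, so no vertex
duplication is needed). -/
def IsFigure (F : Finset Vtx) : Prop :=
  F.Nonempty ∧
  (∀ c ∈ F, ∀ c' ∈ F, Relation.ReflTransGen (fun x y => x ∈ F ∧ y ∈ F ∧ adj4 x y) c c') ∧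
  (∀ x y : ℤ,
    ¬((x - 1, y - 1) ∈ F ∧ (x, y) ∈ F ∧ (x, y - 1) ∉ F ∧ (x - 1, y) ∉ F) ∧
    ¬((x, y - 1) ∈ F ∧ (x - 1, y) ∈ F ∧ (x - 1, y - 1) ∉ F ∧ (x, y) ∉ F))

/-- one of the two cells adjacent to the edge `[a]` -/
def cellA (a : GArc) : Vtx :=
  if a.1.2 = a.2.2 then (min a.1.1 a.2.1, a.1.2) else (a.1.1, min a.1.2 a.2.2)

/-- the other cell adjacent to the edge `[a]` -/
def cellB (a : GArc) : Vtx :=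
  if a.1.2 = a.2.2 then (min a.1.1 a.2.1, a.1.2 - 1) else (a.1.1 - 1, min a.1.2 a.2.2)

/-- arcs of the graph `G_F`: the edge `[a]` is a side of a cell of `F` -/
def ArcF (F : Finset Vtx) (a : GArc) : Prop := IsArc a ∧ (cellA a ∈ F ∨ cellB a ∈ F)

/-- boundary arcs of `F`: exactly one of the two adjacent cells is in `F` -/
def BoundaryArcF (F : Finset Vtx) (a : GArc) : Prop :=
  IsArc a ∧ ¬(cellA a ∈ F ↔ cellB a ∈ F)

/-- interior arcs of `F`: both adjacent cells are in `F` -/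
def InteriorArcF (F : Finset Vtx) (a : GArc) : Prop :=
  IsArc a ∧ cellA a ∈ F ∧ cellB a ∈ F

/-- `v` is a corner of the cell with lower-left corner `c` -/
def isCorner (v c : Vtx) : Prop :=
  (v.1 = c.1 ∨ v.1 = c.1 + 1) ∧ (v.2 = c.2 ∨ v.2 = c.2 + 1)

/-- vertices of `G_F`: the corners of the cells of `F` -/
def VF (F : Finset Vtx) : Set Vtx := {v | ∃ c ∈ F, isCorner v c}

/-- a cycle of the graph `G_F` -/
def IsCycleF (F : Finset Vtx) (C : List Vtx) : Prop :=
  2 ≤ C.length ∧ C.head? = C.getLast? ∧ ∀ a ∈ arcsOf C, ArcF F a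

/-- an elementary cycle of the graph `G_F` -/
def IsElemCycleF (F : Finset Vtx) (C : List Vtx) : Prop :=
  IsCycleF F C ∧ C.dropLast.Nodup

/-- number of black cells of `F` minus number of white cells of `F` enclosed by
the clockwise cycle `C` -/
def DisF (F : Finset Vtx) (C : List Vtx) : ℤ := -∑ c ∈ F, wind C c * colorSign c

/-- `ef` is skew-symmetric on the arcs of `G_F` -/
def IsSkewOnF (F : Finset Vtx) (ef : GArc → ℤ) : Prop :=
  ∀ a, ArcF F a → ef (arev a) = -ef a

/-- an equilibrium function of the figure `F` -/
def IsEquilibrium (F : Finset Vtx) (ef : GArc → ℤ) : Prop :=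
  IsSkewOnF F ef ∧
  ∀ C, IsElemCycleF F C → IsClockwise C → sumOn sp C + sumOn ef C = 4 * DisF F C

/-- the four sides of the cell `c`, as canonically oriented arcs -/
def sides (c : Vtx) : List GArc :=
  [((c.1, c.2), (c.1 + 1, c.2)), ((c.1, c.2 + 1), (c.1 + 1, c.2 + 1)),
   ((c.1, c.2), (c.1, c.2 + 1)), ((c.1 + 1, c.2), (c.1 + 1, c.2 + 1))]

/-- a domino tiling of `F`, encoded by the symmetric set `D` of the arcs whose
underlying edges are the central axes of its dominoes: every central axis has
both of its adjacent cells in `F` (dominoes are included in `F`), and every cell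
of `F` is covered by exactly one domino (exactly one of its sides is a central
axis): no overlap and no gap. -/
def IsTiling (F : Finset Vtx) (D : Set GArc) : Prop :=
  (∀ a ∈ D, arev a ∈ D) ∧
  (∀ a ∈ D, IsArc a ∧ cellA a ∈ F ∧ cellB a ∈ F) ∧
  (∀ c ∈ F, ∃! a, a ∈ sides c ∧ a ∈ D)

/-- characteristic function of a tiling: `1` on central axes, `0` elsewhere -/
def chi (D : Set GArc) (a : GArc) : ℤ := if a ∈ D then 1 else 0

/-- the height difference function of a tiling -/
def gT (ef : GArc → ℤ) (D : Set GArc) (a : GArc) : ℤ :=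
  ef a - sp a + 2 * sp a * (1 - 2 * chi D a)

/-- the function `t`: `eq(a)-sp(a)+2` on interior arcs, `eq(a)+sp(a)` on boundary arcs -/
def tArc (F : Finset Vtx) (ef : GArc → ℤ) (a : GArc) : ℤ :=
  if cellA a ∈ F ∧ cellB a ∈ F then ef a - sp a + 2 else ef a + sp a

/-- the function `b`: `eq(a)-sp(a)-2` on interior arcs, `eq(a)+sp(a)` on boundary arcs -/
def bArc (F : Finset Vtx) (ef : GArc → ℤ) (a : GArc) : ℤ :=
  if cellA a ∈ F ∧ cellB a ∈ F then ef a - sp a - 2 else ef a + sp a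

/-- the 8-connected component of the cell `c` in the complement of `F` -/
def comp8 (F : Finset Vtx) (c : Vtx) : Set Vtx :=
  {c' | Relation.ReflTransGen (fun x y => x ∉ F ∧ y ∉ F ∧ adj8 x y) c c'}

/-- `c` belongs to a hole of `F` (a finite 8-connected component of the complement) -/
def IsHoleCell (F : Finset Vtx) (c : Vtx) : Prop := c ∉ F ∧ (comp8 F c).Finite

/-- `c` belongs to `H_∞`, the infinite 8-connected component of the complement -/
def IsHinfCell (F : Finset Vtx) (c : Vtx) : Prop := c ∉ F ∧ ¬(comp8 F c).Finite

/-- `w` is a vertex of `V_F` on the boundary of `H_∞` -/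
def OnOuterBoundary (F : Finset Vtx) (w : Vtx) : Prop :=
  w ∈ VF F ∧ ∃ c, IsHinfCell F c ∧ isCorner w c

/-- vertices on the boundary of `F` -/
def Vb (F : Finset Vtx) : Set Vtx :=
  {v | (∃ c ∈ F, isCorner v c) ∧ ∃ c, c ∉ F ∧ isCorner v c}

/-- `h` belongs to the class `H_F` of height functions -/
def InHF (F : Finset Vtx) (ef : GArc → ℤ) (w0 : Vtx) (h : Vtx → ℤ) : Prop :=
  h w0 = 0 ∧ ∀ a, ArcF F a →
    (h a.2 - h a.1 = bArc F ef a ∨ h a.2 - h a.1 = tArc F ef a)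

/-- `h` is the height function induced by the tiling `D` (based at `w0`) -/
def IsHeightOf (F : Finset Vtx) (ef : GArc → ℤ) (D : Set GArc) (w0 : Vtx)
    (h : Vtx → ℤ) : Prop :=
  h w0 = 0 ∧ ∀ a, ArcF F a → h a.2 - h a.1 = gT ef D a

/-- a critical cycle: an elementary cycle of `G_F` with `t(C) = 0` -/
def CriticalCycle (F : Finset Vtx) (ef : GArc → ℤ) (C : List Vtx) : Prop :=
  IsElemCycleF F C ∧ sumOn (tArc F ef) C = 0

/-- a strongly critical cycle: critical, and `sp(a) = 1` on all its interior arcs -/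
def StronglyCriticalCycle (F : Finset Vtx) (ef : GArc → ℤ) (C : List Vtx) : Prop :=
  CriticalCycle F ef C ∧ ∀ a ∈ arcsOf C, InteriorArcF F a → sp a = 1

/-- two vertices are critically equivalent when some critical cycle passes
through both -/
def critRel (F : Finset Vtx) (ef : GArc → ℤ) (v v' : Vtx) : Prop :=
  ∃ C, CriticalCycle F ef C ∧ v ∈ C ∧ v' ∈ C

/-- the forced component of the vertex `v` (class of the equivalence relation
generated by critical equivalence) -/
def fcomp (F : Finset Vtx) (ef : GArc → ℤ) (v : Vtx) : Set Vtx :=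
  {v' | v' ∈ VF F ∧ Relation.EqvGen (critRel F ef) v v'}

/-- `S` is a forced component of `F` -/
def IsForcedComponent (F : Finset Vtx) (ef : GArc → ℤ) (S : Set Vtx) : Prop :=
  ∃ v ∈ VF F, S = fcomp F ef v

/-- `a` is an arc of the graph `G_T` of the tiling `D` -/
def GTArc (F : Finset Vtx) (ef : GArc → ℤ) (D : Set GArc) (a : GArc) : Prop :=
  ArcF F a ∧ gT ef D a = tArc F ef a

/-- there is a directed path in `G_T` from `u` to `v` -/
def GTReach (F : Finset Vtx) (ef : GArc → ℤ) (D : Set GArc) (u v : Vtx) : Prop :=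
  Relation.ReflTransGen (fun x y => GTArc F ef D (x, y)) u v

/-- the result of an upward flip on the component `S`: add `4` on `S` -/
def flipUpAt (S : Set Vtx) (h : Vtx → ℤ) : Vtx → ℤ :=
  fun v => h v + S.indicator (fun _ => (4 : ℤ)) v

/-- the result of a downward flip on the component `S`: subtract `4` on `S` -/
def flipDownAt (S : Set Vtx) (h : Vtx → ℤ) : Vtx → ℤ :=
  fun v => h v - S.indicator (fun _ => (4 : ℤ)) v

/-- `|h(v_S) - h'(v_S)|` for a representative `v_S` of `S` -/
def compDiff (h h' : Vtx → ℤ) (S : Set Vtx) : ℤ :=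
  if hS : S.Nonempty then |h hS.some - h' hS.some| else 0

/-- the distance `Δ(h,h') = Σ_U |h(v_U) - h'(v_U)|` over forced components `U` -/
def Delta (F : Finset Vtx) (ef : GArc → ℤ) (h h' : Vtx → ℤ) : ℤ :=
  ∑ᶠ S ∈ {S : Set Vtx | IsForcedComponent F ef S}, compDiff h h' S

/-- a sequence of `n` allowed upward flips at forced components distinct from `U_∞` -/
def UpFlipSeq (F : Finset Vtx) (ef : GArc → ℤ) (w0 : Vtx) (f : ℕ → Vtx → ℤ)
    (n : ℕ) : Prop :=
  ∀ i < n, ∃ S, IsForcedComponent F ef S ∧ S ≠ fcomp F ef w0 ∧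
    InHF F ef w0 (f i) ∧ InHF F ef w0 (f (i + 1)) ∧ f (i + 1) = flipUpAt S (f i)

/-- a sequence of `n` allowed (upward or downward) flips, flipping at step `i`
the forced component `s i` (distinct from `U_∞`) -/
def FlipSeq (F : Finset Vtx) (ef : GArc → ℤ) (w0 : Vtx) (f : ℕ → Vtx → ℤ)
    (s : ℕ → Set Vtx) (n : ℕ) : Prop :=
  ∀ i < n, IsForcedComponent F ef (s i) ∧ s i ≠ fcomp F ef w0 ∧
    InHF F ef w0 (f i) ∧ InHF F ef w0 (f (i + 1)) ∧
    (f (i + 1) = flipUpAt (s i) (f i) ∨ f (i + 1) = flipDownAt (s i) (f i))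

/-- the four arcs of the two horizontal edges through `v` (central axes of the
pair of vertical dominoes covering the 2×2 square centered at `v`) -/
def hPairAxes (v : Vtx) : Set GArc :=
  {((v.1 - 1, v.2), v), (v, (v.1 - 1, v.2)), (v, (v.1 + 1, v.2)), ((v.1 + 1, v.2), v)}

/-- the four arcs of the two vertical edges through `v` (central axes of the
pair of horizontal dominoes covering the 2×2 square centered at `v`) -/
def vPairAxes (v : Vtx) : Set GArc :=
  {((v.1, v.2 - 1), v), (v, (v.1, v.2 - 1)), (v, (v.1, v.2 + 1)), ((v.1, v.2 + 1), v)}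

/-- a local flip: replace the pair of dominoes covering a 2×2 square by the
other pair covering the same square -/
def LocalFlip (D D' : Set GArc) : Prop :=
  ∃ v : Vtx, (hPairAxes v ⊆ D ∧ D' = (D \ hPairAxes v) ∪ vPairAxes v) ∨
             (vPairAxes v ⊆ D ∧ D' = (D \ vPairAxes v) ∪ hPairAxes v)

/-- a sequence of `n` local flips between tilings of `F` -/
def LocalFlipSeq (F : Finset Vtx) (g : ℕ → Set GArc) (n : ℕ) : Prop :=
  ∀ i < n, IsTiling F (g i) ∧ IsTiling F (g (i + 1)) ∧ LocalFlip (g i) (g (i + 1))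

/-- `h` is a maximal element of `(H_F, ≤)` -/
def MaximalInHF (F : Finset Vtx) (ef : GArc → ℤ) (w0 : Vtx) (h : Vtx → ℤ) : Prop :=
  InHF F ef w0 h ∧ ∀ h', InHF F ef w0 h' →
    (∀ v ∈ VF F, h v ≤ h' v) → ∀ v ∈ VF F, h' v = h v

/-- `h` is a minimal element of `(H_F, ≤)` -/
def MinimalInHF (F : Finset Vtx) (ef : GArc → ℤ) (w0 : Vtx) (h : Vtx → ℤ) : Prop :=
  InHF F ef w0 h ∧ ∀ h', InHF F ef w0 h' →
    (∀ v ∈ VF F, h' v ≤ h v) → ∀ v ∈ VF F, h' v = h v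

/-- an elementary cycle of `G_F` enclosing a single cell of `F` -/
def AroundSingleCell (F : Finset Vtx) (C : List Vtx) : Prop :=
  IsElemCycleF F C ∧ ∃ c ∈ F, ∀ c' : Vtx, wind C c' ≠ 0 ↔ c' = c

/-- a cycle of `G_F` following clockwise the boundary of a hole of `F`: it
winds `-1` around each cell of the hole and `0` around every other cell -/
def IsClockwiseHoleContour (F : Finset Vtx) (C : List Vtx) : Prop :=
  IsElemCycleF F C ∧ ∃ c₀, IsHoleCell F c₀ ∧
    (∀ c ∈ comp8 F c₀, wind C c = -1) ∧ (∀ c ∉ comp8 F c₀, wind C c = 0)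

end

/-!
Write `d = h' - h`. Along an arc of `G_F` the heights `h, h'` step by `b` or `t`, with
`t - b ∈ {0, 4}`, so `d` changes by `0` or `±4`; as `d(w₀) = 0` and `G_F` is connected,
`d ∈ 4ℤ`. On a critical cycle the steps of any `h ∈ H_F` are at most `t` and sum to `t(C) = 0`,
so they all equal `t`: hence `d` is constant on forced components.

If `h ≤ h'` and `h ≠ h'`, let `M ≥ 4` be the maximum of `d` and, among the vertices where
`d = M`, pick `u` minimal for reachability along tight arcs (arcs where `h` steps by `t`). If a
tight arc `x → y` entered `U = [u]`, then `d(x) = M` and `u` would reach `x` back; a simple return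
path from `y` to `x` closes up to a critical cycle through `x` and `y`, so `x ∈ U`. Hence every
arc entering `U` is interior with `h` stepping by `b`, which makes the upward flip at `U` allowed;
it lowers `Δ` by `4`, and induction on `Δ` concludes. Conversely, upward flips only increase `h`.
-/

open Relation

theorem List.exists_nodup_isChain_cons_of_relationReflTransGen {α : Type*} {r : α → α → Prop}
    {a b : α} (h : ReflTransGen r a b) :
    ∃ l, IsChain r (a :: l) ∧ (a :: l).getLast (cons_ne_nil a l) = b ∧ (a :: l).Nodup := by
  induction h using ReflTransGen.head_induction_on with
  | refl => exact ⟨[], .singleton _, rfl, nodup_singleton _⟩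
  | @head a c hac _ ih =>
    obtain ⟨l, hchain, hlast, hnodup⟩ := ih
    by_cases ha : a ∈ c :: l
    · obtain ⟨s, t, e⟩ := append_of_mem ha
      rw [e] at hchain hnodup
      exact ⟨t, hchain.right_of_append, by simpa [e] using hlast,
        hnodup.sublist (sublist_append_right _ _)⟩
    · exact ⟨c :: l, hchain.cons_cons hac, by rwa [getLast_cons_cons],
        nodup_cons.2 ⟨ha, hnodup⟩⟩

theorem List.getLast_eq_head_of_head?_eq_getLast? {α : Type*} {x : α} {l : List α}
    (h : (x :: l).head? = (x :: l).getLast?) : (x :: l).getLast (cons_ne_nil x l) = x := by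
  rw [getLast?_eq_some_getLast (cons_ne_nil x l), head?_cons] at h
  exact (Option.some_inj.1 h).symm

theorem List.reflTransGen_of_mem_of_head?_eq_getLast? {α : Type*} {r : α → α → Prop}
    {C : List α} (hC : C.head? = C.getLast?) (hr : C.IsChain r) {x y : α} (hx : x ∈ C)
    (hy : y ∈ C) : ReflTransGen r x y := by
  cases C with
  | nil => simp at hx
  | cons z l =>
    have to_z := hr.backwards_cons_induction (ReflTransGen r · z) l
      (getLast_eq_head_of_head?_eq_getLast? hC) (fun _ _ h₁ h₂ => h₂.head h₁) .refl
    have from_z := hr.induction (ReflTransGen r z ·) _ (fun _ _ h₁ h₂ => h₂.tail h₁)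
      (fun _ => .refl)
    exact (to_z x hx).trans (from_z y hy)

theorem Finset.exists_max_image_reflTransGen_minimal {α : Type*} (r : α → α → Prop)
    (g : α → ℤ) {s : Finset α} (hs : s.Nonempty) :
    ∃ u ∈ s, (∀ v ∈ s, g v ≤ g u) ∧
      ∀ v ∈ s, g v = g u → ReflTransGen r v u → ReflTransGen r u v := by
  obtain ⟨m, hm, hmax⟩ := s.exists_max_image g hs
  set T := s.filter (g · = g m)
  obtain ⟨u, huT, hu⟩ :=
    T.exists_minimalFor (fun x => T.filter (ReflTransGen r · x)) ⟨m, by simp [T, hm]⟩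
  simp only [T, mem_filter] at huT
  refine ⟨u, huT.1, fun v hv => huT.2 ▸ hmax v hv, fun v hv hgv hvu => ?_⟩
  have hvT : v ∈ T := mem_filter.2 ⟨hv, hgv.trans huT.2⟩
  have hsub : T.filter (ReflTransGen r · v) ⊆ T.filter (ReflTransGen r · u) :=
    fun w hw => by simp only [mem_filter] at hw ⊢; exact ⟨hw.1, hw.2.trans hvu⟩
  exact (mem_filter.1 (hu hvT hsub (mem_filter.2 ⟨by simp [T, huT], .refl⟩))).2

section

variable {F : Finset Vtx} {ef : GArc → ℤ} {w0 : Vtx} {h h' : Vtx → ℤ}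

lemma cellA_arev {a : GArc} (ha : IsArc a) : cellA (arev a) = cellA a := by
  unfold IsArc at ha
  unfold cellA arev
  dsimp only
  split_ifs <;> simp only [Prod.ext_iff] <;> omega

lemma cellB_arev {a : GArc} (ha : IsArc a) : cellB (arev a) = cellB a := by
  unfold IsArc at ha
  unfold cellB arev
  dsimp only
  split_ifs <;> simp only [Prod.ext_iff] <;> omega

lemma sp_arev {a : GArc} (ha : IsArc a) : sp (arev a) = -sp a := by
  unfold IsArc at ha
  unfold sp arev colorSign
  dsimp only
  split_ifs <;> first | (exfalso; omega) | ring

lemma arcF_arev {a : GArc} (ha : ArcF F a) : ArcF F (arev a) := by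
  obtain ⟨harc, hcell⟩ := ha
  refine ⟨by unfold IsArc arev at *; dsimp only; omega, ?_⟩
  rwa [cellA_arev harc, cellB_arev harc]

lemma ArcF.fst_mem_VF {a : GArc} (ha : ArcF F a) : a.1 ∈ VF F := by
  obtain ⟨harc, hc | hc⟩ := ha <;> refine ⟨_, hc, ?_⟩ <;> unfold IsArc at harc <;>
    simp only [isCorner, cellA, cellB] <;> split_ifs <;> omega

lemma tArc_arev (hskew : IsSkewOnF F ef) {a : GArc} (ha : ArcF F a) :
    tArc F ef (arev a) = -bArc F ef a := by
  unfold tArc bArc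
  rw [cellA_arev ha.1, cellB_arev ha.1, hskew a ha, sp_arev ha.1]
  split_ifs <;> ring

lemma tArc_eq_bArc_or_eq_add_four (F : Finset Vtx) (ef : GArc → ℤ) (a : GArc) :
    tArc F ef a = bArc F ef a ∨ tArc F ef a = bArc F ef a + 4 := by
  unfold tArc bArc
  split_ifs
  · right; ring
  · left; rfl

lemma bArc_le_tArc (F : Finset Vtx) (ef : GArc → ℤ) (a : GArc) :
    bArc F ef a ≤ tArc F ef a := by
  rcases tArc_eq_bArc_or_eq_add_four F ef a with e | e <;> omega

lemma arcF_of_isCorner {c v v' : Vtx} (hc : c ∈ F) (hv : isCorner v c) (hv' : isCorner v' c)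
    (hvv' : IsArc (v, v')) : ArcF F (v, v') := by
  refine ⟨hvv', ?_⟩
  have : cellA (v, v') = c ∨ cellB (v, v') = c := by
    unfold IsArc at hvv'
    unfold isCorner at hv hv'
    unfold cellA cellB
    dsimp only at *
    split_ifs <;> simp only [Prod.ext_iff] <;> omega
  rcases this with e | e <;> rw [e] <;> simp [hc]

lemma reflTransGen_arcF_of_isCorner {c v v' : Vtx} (hc : c ∈ F) (hv : isCorner v c)
    (hv' : isCorner v' c) : ReflTransGen (fun x y => ArcF F (x, y)) v v' := by
  have step : ∀ x y, isCorner x c → isCorner y c → (x.1 = y.1 ∨ x.2 = y.2) →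
      ReflTransGen (fun x y => ArcF F (x, y)) x y := by
    intro x y hx hy hxy
    by_cases e : x = y
    · rw [e]
    · refine .single (arcF_of_isCorner hc hx hy ?_)
      unfold IsArc isCorner at *
      rw [Prod.ext_iff] at e
      dsimp only
      omega
  have hm : isCorner (v'.1, v.2) c := ⟨hv'.1, hv.2⟩
  exact (step _ _ hv hm (Or.inr rfl)).trans (step _ _ hm hv' (Or.inl rfl))

lemma exists_isCorner_of_adj4 {c c' : Vtx} (h : adj4 c c') :
    ∃ v, isCorner v c ∧ isCorner v c' :=
  ⟨(max c.1 c'.1, max c.2 c'.2), by unfold adj4 at h; unfold isCorner; omega⟩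

lemma reflTransGen_arcF_of_mem_VF (hF : IsFigure F) {v v' : Vtx} (hv : v ∈ VF F)
    (hv' : v' ∈ VF F) : ReflTransGen (fun x y => ArcF F (x, y)) v v' := by
  obtain ⟨c, hc, hvc⟩ := hv
  obtain ⟨c', hc', hvc'⟩ := hv'
  induction hF.2.1 c hc c' hc' generalizing v' with
  | refl => exact reflTransGen_arcF_of_isCorner hc hvc hvc'
  | tail _ hstep ih =>
    obtain ⟨w, hw, hw'⟩ := exists_isCorner_of_adj4 hstep.2.2
    exact (ih hstep.1 hw).trans (reflTransGen_arcF_of_isCorner hstep.2.1 hw' hvc')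

lemma four_dvd_sub_of_arcF (hh : InHF F ef w0 h) (hh' : InHF F ef w0 h') {a : GArc}
    (ha : ArcF F a) : 4 ∣ (h' a.2 - h a.2) - (h' a.1 - h a.1) := by
  rcases hh.2 a ha with e | e <;> rcases hh'.2 a ha with e' | e' <;>
    rcases tArc_eq_bArc_or_eq_add_four F ef a with t | t <;> omega

lemma four_dvd_sub (hF : IsFigure F) (hw0 : w0 ∈ VF F) (hh : InHF F ef w0 h)
    (hh' : InHF F ef w0 h') {v : Vtx} (hv : v ∈ VF F) : 4 ∣ h' v - h v := by
  have hreach := reflTransGen_arcF_of_mem_VF hF hw0 hv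
  clear hv
  induction hreach with
  | refl => simp [hh.1, hh'.1]
  | tail _ ha ih =>
    have := four_dvd_sub_of_arcF hh hh' ha
    dsimp only at this
    omega

lemma forall_mem_arcsOf_iff_isChain {r : Vtx → Vtx → Prop} :
    ∀ {l : List Vtx}, (∀ a ∈ arcsOf l, r a.1 a.2) ↔ l.IsChain r
  | [] | [_] => by simp [arcsOf]
  | x :: y :: l => by
    rw [List.isChain_cons_cons, ← forall_mem_arcsOf_iff_isChain]
    exact List.forall_mem_cons

lemma sumOn_sub_cons (φ : Vtx → ℤ) : ∀ (x : Vtx) (l : List Vtx),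
    sumOn (fun a => φ a.2 - φ a.1) (x :: l) = φ ((x :: l).getLast (List.cons_ne_nil x l)) - φ x
  | x, [] => by simp [sumOn, arcsOf]
  | x, y :: l => by
    rw [List.getLast_cons_cons, ← sub_add_sub_cancel _ (φ y), ← sumOn_sub_cons φ y l]
    exact (List.sum_cons).trans (add_comm _ _)

lemma sumOn_sub_eq_zero (φ : Vtx → ℤ) {C : List Vtx} (hC : C.head? = C.getLast?) :
    sumOn (fun a => φ a.2 - φ a.1) C = 0 := by
  cases C with
  | nil => rfl
  | cons x l => rw [sumOn_sub_cons, List.getLast_eq_head_of_head?_eq_getLast? hC, sub_self]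

def TightArc (F : Finset Vtx) (ef : GArc → ℤ) (h : Vtx → ℤ) (x y : Vtx) : Prop :=
  ArcF F (x, y) ∧ h y - h x = tArc F ef (x, y)

lemma CriticalCycle.isChain_tightArc (hh : InHF F ef w0 h) {C : List Vtx}
    (hC : CriticalCycle F ef C) : C.IsChain (TightArc F ef h) := by
  obtain ⟨⟨⟨-, hclosed, harcs⟩, -⟩, hsum⟩ := hC
  have hle : ∀ a ∈ arcsOf C, h a.2 - h a.1 ≤ tArc F ef a := fun a ha => by
    rcases hh.2 a (harcs a ha) with e | e <;> linarith [bArc_le_tArc F ef a]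
  refine forall_mem_arcsOf_iff_isChain.1 fun a ha => ⟨harcs a ha, ?_⟩
  by_contra hne
  have hlt := List.sum_lt_sum _ _ hle ⟨a, ha, (hle a ha).lt_of_ne hne⟩
  have h0 := sumOn_sub_eq_zero h hclosed
  unfold sumOn at hsum h0
  omega

lemma sub_eq_of_critRel (hh : InHF F ef w0 h) (hh' : InHF F ef w0 h') {x y : Vtx}
    (hxy : critRel F ef x y) : h' x - h x = h' y - h y := by
  obtain ⟨C, hC, hx, hy⟩ := hxy
  have hboth : C.IsChain (fun u v => TightArc F ef h u v ∧ TightArc F ef h' u v) :=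
    forall_mem_arcsOf_iff_isChain.1 fun a ha =>
      ⟨forall_mem_arcsOf_iff_isChain.2 (hC.isChain_tightArc hh) a ha,
        forall_mem_arcsOf_iff_isChain.2 (hC.isChain_tightArc hh') a ha⟩
  have hreach := List.reflTransGen_of_mem_of_head?_eq_getLast? hC.1.1.2.1 hboth hx hy
  clear hy
  induction hreach with
  | refl => rfl
  | tail _ hst ih =>
    obtain ⟨⟨-, e⟩, ⟨-, e'⟩⟩ := hst
    omega

lemma sub_eq_of_eqvGen (hh : InHF F ef w0 h) (hh' : InHF F ef w0 h') {x y : Vtx}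
    (hxy : EqvGen (critRel F ef) x y) : h' x - h x = h' y - h y := by
  induction hxy with
  | rel _ _ hr => exact sub_eq_of_critRel hh hh' hr
  | refl => rfl
  | symm _ _ _ ih => exact ih.symm
  | trans _ _ _ _ _ ih₁ ih₂ => exact ih₁.trans ih₂

instance : Std.Symm (critRel F ef) := ⟨fun _ _ ⟨C, hC, hx, hy⟩ => ⟨C, hC, hy, hx⟩⟩

lemma reflTransGen_tightArc_of_eqvGen (hh : InHF F ef w0 h) {x y : Vtx}
    (hxy : EqvGen (critRel F ef) x y) : ReflTransGen (TightArc F ef h) x y := by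
  rw [EqvGen.eqvGen_eq_reflTransGen] at hxy
  induction hxy with
  | refl => exact .refl
  | tail _ huv ih =>
    obtain ⟨C, hC, hu, hv⟩ := huv
    exact ih.trans <|
      List.reflTransGen_of_mem_of_head?_eq_getLast? hC.1.1.2.1 (hC.isChain_tightArc hh) hu hv

lemma critRel_of_tightArc {x y : Vtx} (hxy : TightArc F ef h x y)
    (hyx : ReflTransGen (TightArc F ef h) y x) : critRel F ef x y := by
  obtain ⟨l, hchain, hlast, hnodup⟩ :=
    List.exists_nodup_isChain_cons_of_relationReflTransGen hyx
  have hclosed : (x :: y :: l).head? = (x :: y :: l).getLast? := by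
    rw [List.getLast?_eq_some_getLast (List.cons_ne_nil _ _), List.getLast_cons_cons, hlast]
    rfl
  have htight := forall_mem_arcsOf_iff_isChain.2 (hchain.cons_cons hxy)
  have hdrop : ((y :: l).dropLast ++ [x]).Nodup := by
    rwa [← hlast, List.dropLast_append_getLast]
  refine ⟨x :: y :: l, ⟨⟨⟨by simp, hclosed, fun a ha => (htight a ha).1⟩, ?_⟩, ?_⟩,
    by simp, by simp⟩
  · rw [List.dropLast_cons_cons]
    exact (List.perm_append_singleton x _).nodup_iff.1 hdrop
  · rw [← sumOn_sub_eq_zero h hclosed]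
    exact congrArg List.sum (List.map_congr_left fun a ha => (htight a ha).2.symm)

lemma mem_fcomp_self {v : Vtx} (hv : v ∈ VF F) : v ∈ fcomp F ef v := ⟨hv, .refl v⟩

lemma fcomp_eq_of_mem {v x : Vtx} (hx : x ∈ fcomp F ef v) : fcomp F ef x = fcomp F ef v := by
  ext y
  exact ⟨fun ⟨hy, e⟩ => ⟨hy, .trans _ _ _ hx.2 e⟩,
    fun ⟨hy, e⟩ => ⟨hy, .trans _ _ _ (.symm _ _ hx.2) e⟩⟩

lemma VF_finite (F : Finset Vtx) : (VF F).Finite :=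
  (F.finite_toSet.biUnion fun c _ => Set.finite_Icc c (c.1 + 1, c.2 + 1)).subset
    fun v ⟨c, hc, hv⟩ => Set.mem_biUnion hc <| by
      unfold isCorner at hv
      simp only [Set.mem_Icc, Prod.le_def]
      omega

lemma isForcedComponent_finite (F : Finset Vtx) (ef : GArc → ℤ) :
    {S | IsForcedComponent F ef S}.Finite :=
  ((VF_finite F).image (fcomp F ef)).subset fun _ ⟨v, hv, hS⟩ => ⟨v, hv, hS.symm⟩

lemma Delta_eq_sum (h h' : Vtx → ℤ) :
    Delta F ef h h' = ∑ S ∈ (isForcedComponent_finite F ef).toFinset, compDiff h h' S :=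
  finsum_mem_eq_finite_toFinset_sum _ _

lemma Delta_nonneg (h h' : Vtx → ℤ) : 0 ≤ Delta F ef h h' := by
  rw [Delta_eq_sum]
  refine Finset.sum_nonneg fun S _ => ?_
  unfold compDiff
  split_ifs
  exacts [abs_nonneg _, le_rfl]

lemma Delta_eq_zero (heq : ∀ v ∈ VF F, h v = h' v) : Delta F ef h h' = 0 := by
  refine finsum_mem_eq_zero_of_forall_eq_zero fun S ⟨v, hv, hS⟩ => ?_
  unfold compDiff
  split_ifs with hne
  · have : hne.some ∈ fcomp F ef v := hS ▸ hne.some_mem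
    rw [heq _ this.1, sub_self, abs_zero]
  · rfl

lemma compDiff_flipUpAt {u : Vtx} (hM : ∀ x ∈ fcomp F ef u, 4 ≤ h' x - h x) {S : Set Vtx}
    (hS : IsForcedComponent F ef S) :
    compDiff (flipUpAt (fcomp F ef u) h) h' S =
      compDiff h h' S - if S = fcomp F ef u then 4 else 0 := by
  obtain ⟨v, hv, rfl⟩ := hS
  have hne : (fcomp F ef v).Nonempty := ⟨v, mem_fcomp_self hv⟩
  have hs : hne.some ∈ fcomp F ef v := hne.some_mem
  simp only [compDiff, dif_pos hne, flipUpAt]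
  by_cases hsU : hne.some ∈ fcomp F ef u
  · have := hM _ hsU
    rw [if_pos ((fcomp_eq_of_mem hs).symm.trans (fcomp_eq_of_mem hsU)),
      Set.indicator_of_mem hsU, abs_of_nonpos (by omega), abs_of_nonpos (by omega)]
    ring
  · have hSU : fcomp F ef v ≠ fcomp F ef u := fun e => hsU (e ▸ hs)
    rw [if_neg hSU, Set.indicator_of_notMem hsU]
    simp

lemma Delta_flipUpAt {u : Vtx} (hu : u ∈ VF F) (hM : ∀ x ∈ fcomp F ef u, 4 ≤ h' x - h x) :
    Delta F ef (flipUpAt (fcomp F ef u) h) h' = Delta F ef h h' - 4 := by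
  have hU : fcomp F ef u ∈ (isForcedComponent_finite F ef).toFinset :=
    (Set.Finite.mem_toFinset _).2 ⟨u, hu, rfl⟩
  rw [Delta_eq_sum, Delta_eq_sum, Finset.sum_congr rfl fun S hS =>
      compDiff_flipUpAt hM ((isForcedComponent_finite F ef).mem_toFinset.1 hS),
    Finset.sum_sub_distrib, Finset.sum_ite_eq', if_pos hU]

/-- `h a.2 - h a.1 + 4 = tArc F ef a` says that `a` is interior and `h` steps by `b` along it. -/
lemma inHF_flipUpAt (hskew : IsSkewOnF F ef) (hh : InHF F ef w0 h) {U : Set Vtx}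
    (hw0 : w0 ∉ U)
    (hin : ∀ a, ArcF F a → a.1 ∉ U → a.2 ∈ U → h a.2 - h a.1 + 4 = tArc F ef a) :
    InHF F ef w0 (flipUpAt U h) := by
  refine ⟨by simp [flipUpAt, hw0, hh.1], fun a ha => ?_⟩
  simp only [flipUpAt, Set.indicator_apply]
  by_cases h₁ : a.1 ∈ U <;> by_cases h₂ : a.2 ∈ U <;>
    simp only [h₁, h₂, if_true, if_false]
  · rcases hh.2 a ha with e | e <;> omega
  · have := hin (arev a) (arcF_arev ha) h₂ h₁
    rw [tArc_arev hskew ha] at this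
    simp only [arev] at this
    omega
  · have := hin a ha h₁ h₂
    omega
  · rcases hh.2 a ha with e | e <;> omega

lemma tArc_eq_add_four_of_enters_fcomp (hh : InHF F ef w0 h) (hh' : InHF F ef w0 h')
    {u : Vtx} (hmax : ∀ v ∈ VF F, h' v - h v ≤ h' u - h u)
    (hmin : ∀ v ∈ VF F, h' v - h v = h' u - h u →
      ReflTransGen (TightArc F ef h) v u → ReflTransGen (TightArc F ef h) u v)
    {a : GArc} (ha : ArcF F a) (ha₁ : a.1 ∉ fcomp F ef u) (ha₂ : a.2 ∈ fcomp F ef u) :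
    h a.2 - h a.1 + 4 = tArc F ef a := by
  by_contra hne
  have hV := ha.fst_mem_VF
  have ht : h a.2 - h a.1 = tArc F ef a := by
    rcases hh.2 a ha with e | e <;> rcases tArc_eq_bArc_or_eq_add_four F ef a with t | t <;> omega
  have htight : TightArc F ef h a.1 a.2 := ⟨ha, ht⟩
  have hd₁ : h' a.1 - h a.1 = h' u - h u := by
    have := sub_eq_of_eqvGen hh hh' ha₂.2
    have := hmax a.1 hV
    rcases hh'.2 a ha with e | e <;> linarith [bArc_le_tArc F ef a]
  have hreach : ReflTransGen (TightArc F ef h) a.2 u :=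
    reflTransGen_tightArc_of_eqvGen hh (.symm _ _ ha₂.2)
  have hback := hmin a.1 hV hd₁ (hreach.head htight)
  have hcrit := critRel_of_tightArc htight (hreach.trans hback)
  exact ha₁ ⟨hV, .trans _ _ _ ha₂.2 (.symm _ _ (.rel _ _ hcrit))⟩

lemma exists_allowed_flipUpAt (hF : IsFigure F) (hskew : IsSkewOnF F ef) (hw0 : w0 ∈ VF F)
    (hh : InHF F ef w0 h) (hh' : InHF F ef w0 h') (hle : ∀ v ∈ VF F, h v ≤ h' v)
    (hne : ¬∀ v ∈ VF F, h v = h' v) :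
    ∃ U, IsForcedComponent F ef U ∧ U ≠ fcomp F ef w0 ∧ InHF F ef w0 (flipUpAt U h) ∧
      (∀ v ∈ VF F, flipUpAt U h v ≤ h' v) ∧
      Delta F ef (flipUpAt U h) h' = Delta F ef h h' - 4 := by
  simp only [not_forall] at hne
  obtain ⟨v₀, hv₀, hne⟩ := hne
  obtain ⟨u, hu, hmax, hmin⟩ :=
    (VF_finite F).toFinset.exists_max_image_reflTransGen_minimal (TightArc F ef h)
      (fun v => h' v - h v) ⟨v₀, (Set.Finite.mem_toFinset _).2 hv₀⟩
  simp only [Set.Finite.mem_toFinset] at hu hmax hmin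
  have hM : 4 ≤ h' u - h u := by
    have := hmax v₀ hv₀
    have := hle v₀ hv₀
    have := four_dvd_sub hF hw0 hh hh' hu
    omega
  have hU : ∀ x ∈ fcomp F ef u, h' x - h x = h' u - h u :=
    fun x hx => (sub_eq_of_eqvGen hh hh' hx.2).symm
  have hw0U : w0 ∉ fcomp F ef u := fun hw => by
    have := hU w0 hw
    rw [hh.1, hh'.1] at this
    omega
  refine ⟨fcomp F ef u, ⟨u, hu, rfl⟩, fun e => hw0U (e ▸ mem_fcomp_self hw0),
    inHF_flipUpAt hskew hh hw0U fun a ha h₁ h₂ =>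
      tArc_eq_add_four_of_enters_fcomp hh hh' hmax hmin ha h₁ h₂,
    fun v hv => ?_, Delta_flipUpAt hu fun x hx => (hU x hx).symm ▸ hM⟩
  by_cases hvU : v ∈ fcomp F ef u
  · have := hU v hvU
    simp only [flipUpAt, Set.indicator_of_mem hvU]
    omega
  · simpa [flipUpAt, Set.indicator_of_notMem hvU] using hle v hv

lemma UpFlipSeq.cons {f : ℕ → Vtx → ℤ} {n : ℕ} (hf : UpFlipSeq F ef w0 f n)
    {g : Vtx → ℤ} {S : Set Vtx} (hS : IsForcedComponent F ef S) (hSw : S ≠ fcomp F ef w0)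
    (hg : InHF F ef w0 g) (hflip : InHF F ef w0 (flipUpAt S g)) (hf0 : f 0 = flipUpAt S g) :
    UpFlipSeq F ef w0 (fun | 0 => g | i + 1 => f i) (n + 1)
  | 0, _ => ⟨S, hS, hSw, hg, show InHF F ef w0 (f 0) from hf0 ▸ hflip, hf0⟩
  | i + 1, hi => hf i (by omega)

lemma UpFlipSeq.le_apply {f : ℕ → Vtx → ℤ} {n : ℕ} (hf : UpFlipSeq F ef w0 f n)
    (v : Vtx) : f 0 v ≤ f n v := by
  induction n with
  | zero => rfl
  | succ n ih =>
    obtain ⟨S, -, -, -, -, e⟩ := hf n n.lt_succ_self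
    have : 0 ≤ S.indicator (fun _ => (4 : ℤ)) v :=
      Set.indicator_nonneg (fun _ _ => by norm_num) v
    calc f 0 v ≤ f n v := ih fun i hi => hf i (by omega)
      _ ≤ f (n + 1) v := by rw [e, flipUpAt]; omega

lemma exists_upFlipSeq_of_le (hF : IsFigure F) (hskew : IsSkewOnF F ef) (hw0 : w0 ∈ VF F)
    (hh' : InHF F ef w0 h') (h : Vtx → ℤ) (hh : InHF F ef w0 h)
    (hle : ∀ v ∈ VF F, h v ≤ h' v) :
    ∃ (n : ℕ) (f : ℕ → Vtx → ℤ), 4 * (n : ℤ) = Delta F ef h h' ∧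
      f 0 = h ∧ (∀ v ∈ VF F, f n v = h' v) ∧ UpFlipSeq F ef w0 f n := by
  induction hN : (Delta F ef h h').toNat using Nat.strong_induction_on generalizing h with
  | _ N ih =>
  by_cases heq : ∀ v ∈ VF F, h v = h' v
  · exact ⟨0, fun _ => h, by simp [Delta_eq_zero heq], rfl, heq,
      fun i hi => absurd hi i.not_lt_zero⟩
  obtain ⟨U, hU, hUw, hflip, hle', hΔ⟩ := exists_allowed_flipUpAt hF hskew hw0 hh hh' hle heq
  have := Delta_nonneg (F := F) (ef := ef) (flipUpAt U h) h'
  obtain ⟨n, f, hn, hf0, hfn, hf⟩ := ih _ (by omega) (flipUpAt U h) hflip hle' rfl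
  exact ⟨n + 1, _, by push_cast; omega, rfl, hfn, hf.cons hU hUw hh hflip hf0⟩

end

/-- `h ≤ h'` on `V_F` iff `h'` is reachable from `h` by a finite
sequence of allowed upward flips at forced components distinct from `U_∞`;
moreover, in this case, `Δ(h,h')/4` flips suffice. -/
theorem le_iff_upward_flips (F : Finset Vtx) (hF : IsFigure F)
    (ef : GArc → ℤ) (hef : IsEquilibrium F ef)
    (w0 : Vtx) (hw0 : OnOuterBoundary F w0)
    (h h' : Vtx → ℤ) (hh : InHF F ef w0 h) (hh' : InHF F ef w0 h') :
    ((∀ v ∈ VF F, h v ≤ h' v) ↔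
      ∃ (n : ℕ) (f : ℕ → Vtx → ℤ), f 0 = h ∧ (∀ v ∈ VF F, f n v = h' v) ∧
        UpFlipSeq F ef w0 f n) ∧
    ((∀ v ∈ VF F, h v ≤ h' v) →
      ∃ (n : ℕ) (f : ℕ → Vtx → ℤ), 4 * (n : ℤ) = Delta F ef h h' ∧
        f 0 = h ∧ (∀ v ∈ VF F, f n v = h' v) ∧ UpFlipSeq F ef w0 f n) := by
  have hflips := exists_upFlipSeq_of_le hF hef.1 hw0.1 hh' h hh
  refine ⟨⟨fun hle => ?_, ?_⟩, hflips⟩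
  · obtain ⟨n, f, -, hf⟩ := hflips hle
    exact ⟨n, f, hf⟩
  · rintro ⟨n, f, rfl, hfn, hf⟩ v hv
    exact (hf.le_apply v).trans_eq (hfn v hv)
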